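/- arXiv:1401.6497 — 4 statements merged into one kernel-verified Lean document; each statement's English description precedes it below -/
import Mathlib

section
/- Let (Ω, F, P) be a probability space and for each n = 1,...,N let A^(n) : Ω → ℝ^{I_n × R} be a random matrix with rows a^(n)_{i_n} : Ω → ℝ^R. Assume that the collection of all row vectors {a^(n)_{i_n} : n = 1,...,N, i_n = 1,...,I_n} is mutually independent and that every entry of every A^(n) is square-integrable. Then E[(⊙_n A^(n))^T (⊙_n A^(n))] = Σ_{i_1=1}^{I_1} ··· Σ_{i_N=1}^{I_N} ⊛_n E[a^(n)_{i_n} a^(n)T_{i_n}], where the expectation of a random matrix is taken entrywise. -/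
open scoped BigOperators Matrix
open Finset Matrix MeasureTheory ProbabilityTheory

/-- Khatri-Rao product (in reverse order): row indexed by a multi-index. -/
def khatriRao {ι : Type*} [Fintype ι] {I : ι → ℕ} {κ : Type*}
    (A : (n : ι) → Matrix (Fin (I n)) κ ℝ) :
    Matrix ((n : ι) → Fin (I n)) κ ℝ :=
  fun i k => ∏ n, A n (i n) k

/-!
Entrywise, `(⊙ₙ A⁽ⁿ⁾)ᵀ (⊙ₙ A⁽ⁿ⁾)` is a sum over multi-indices `i` of the products
`∏ₙ A⁽ⁿ⁾ᵢₙᵣ A⁽ⁿ⁾ᵢₙₛ`. For a fixed `i` the factors are functions of the distinct rows `a⁽ⁿ⁾ᵢₙ`,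
hence independent, and each is integrable by Cauchy–Schwarz; so the expectation of the product
splits into the product of the expectations, and linearity of the integral does the rest.
-/

lemma khatriRao_transpose_mul_khatriRao_apply {ι : Type*} [Fintype ι] [DecidableEq ι]
    {I : ι → ℕ} {κ : Type*} (A B : (n : ι) → Matrix (Fin (I n)) κ ℝ) (r s : κ) :
    ((khatriRao A)ᵀ * khatriRao B) r s =
      ∑ i : (n : ι) → Fin (I n), ∏ n, A n (i n) r * B n (i n) s := by
  rw [mul_apply]
  simp only [transpose_apply, khatriRao, prod_mul_distrib]

namespace ProbabilityTheory

variable {Ω ι : Type*} [MeasurableSpace Ω] {μ : Measure Ω} [Fintype ι]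

/-- The joint law is the product of the marginals, and products of integrable coordinate
functions are integrable for a product measure. -/
lemma iIndepFun.integrable_fun_prod {X : ι → Ω → ℝ} (hX : iIndepFun X μ)
    (hint : ∀ i, Integrable (X i) μ) : Integrable (fun ω => ∏ i, X i ω) μ := by
  have mX : ∀ i, AEMeasurable (X i) μ := fun i => (hint i).aemeasurable
  have hlaw : Integrable (fun x : ι → ℝ => ∏ i, x i) (μ.map fun ω i => X i ω) := by
    have := hX.isProbabilityMeasure
    rw [hX.map_fun_eq_pi_map mX]
    exact Integrable.fintype_prod_dep fun i =>
      (integrable_map_measure aestronglyMeasurable_id (mX i)).2 (hint i)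
  exact (integrable_map_measure hlaw.aestronglyMeasurable (aemeasurable_pi_lambda _ mX)).1 hlaw

end ProbabilityTheory

theorem stmt1_general {N R : ℕ} {I : Fin N → ℕ}
    {Ω : Type*} [MeasurableSpace Ω] (P : Measure Ω)
    (A : (n : Fin N) → Ω → Matrix (Fin (I n)) (Fin R) ℝ)
    (hindep : iIndepFun
      (fun p : Σ n : Fin N, Fin (I n) => fun ω => A p.1 ω p.2) P)
    (hL2 : ∀ n (i : Fin (I n)) (r : Fin R), MemLp (fun ω => A n ω i r) 2 P) :
    ∀ r s : Fin R,
      (∫ ω, ((khatriRao (fun n => A n ω))ᵀ * khatriRao (fun n => A n ω)) r s ∂P)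
        = ∑ i : (n : Fin N) → Fin (I n),
            ∏ n, ∫ ω, A n ω (i n) r * A n ω (i n) s ∂P := by
  intro r s
  have hfactor_indep : ∀ i : (n : Fin N) → Fin (I n),
      iIndepFun (fun n ω => A n ω (i n) r * A n ω (i n) s) P :=
    fun i => (hindep.precomp (g := fun n => (⟨n, i n⟩ : Σ n, Fin (I n)))
      fun _ _ h => (Sigma.mk.inj h).1).comp _
        fun _ => (measurable_pi_apply r).mul (measurable_pi_apply s)
  have hfactor_int : ∀ (i : (n : Fin N) → Fin (I n)) n,
      Integrable (fun ω => A n ω (i n) r * A n ω (i n) s) P :=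
    fun i n => (hL2 n (i n) r).integrable_mul (hL2 n (i n) s)
  simp_rw [khatriRao_transpose_mul_khatriRao_apply]
  rw [integral_finsetSum _ fun i _ => (hfactor_indep i).integrable_fun_prod (hfactor_int i)]
  exact sum_congr rfl fun i _ => (hfactor_indep i).integral_fun_prod_eq_prod_integral
    fun n => (hfactor_int i n).aestronglyMeasurable

theorem stmt1 {N R : ℕ} {I : Fin N → ℕ}
    {Ω : Type*} [MeasurableSpace Ω] (P : Measure Ω) [IsProbabilityMeasure P]
    (A : (n : Fin N) → Ω → Matrix (Fin (I n)) (Fin R) ℝ)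
    (hmeas : ∀ n (i : Fin (I n)), Measurable (fun ω => A n ω i))
    (hindep : iIndepFun
      (fun p : Σ n : Fin N, Fin (I n) => fun ω => A p.1 ω p.2) P)
    (hL2 : ∀ n (i : Fin (I n)) (r : Fin R), MemLp (fun ω => A n ω i r) 2 P) :
    ∀ r s : Fin R,
      (∫ ω, ((khatriRao (fun n => A n ω))ᵀ * khatriRao (fun n => A n ω)) r s ∂P)
        = ∑ i : (n : Fin N) → Fin (I n),
            ∏ n, ∫ ω, A n ω (i n) r * A n ω (i n) s ∂P :=
  stmt1_general P A hindep hL2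
end

section
/- Let A^(1), ..., A^(N) be matrices with A^(n) of size I_n × R and rows a^(n)_{i_n} ∈ ℝ^R. Then the squared Frobenius norm of the Kruskal tensor satisfies ‖[[A^(1),...,A^(N)]]‖_F² = Σ_{i_1=1}^{I_1} ··· Σ_{i_N=1}^{I_N} ⟨a^(1)_{i_1} a^(1)T_{i_1}, ..., a^(N)_{i_N} a^(N)T_{i_N}⟩, where ⟨·,...,·⟩ on the right is the generalized inner product of R × R matrices. -/
open scoped BigOperators Matrix
open Finset Matrix

/-- Outer product of `N` vectors, as a tensor indexed by multi-indices. -/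
def outerProd {ι : Type*} [Fintype ι] {I : ι → ℕ}
    (u : (n : ι) → Fin (I n) → ℝ) : ((n : ι) → Fin (I n)) → ℝ :=
  fun i => ∏ n, u n (i n)

/-- Kruskal operator: the tensor `[[A⁽¹⁾, …, A⁽ᴺ⁾]] = ∑ᵣ a⁽¹⁾₊ᵣ ∘ ⋯ ∘ a⁽ᴺ⁾₊ᵣ`. -/
def kruskal {ι : Type*} [Fintype ι] {I : ι → ℕ} {R : ℕ}
    (A : (n : ι) → Matrix (Fin (I n)) (Fin R) ℝ) : ((n : ι) → Fin (I n)) → ℝ :=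
  ∑ r : Fin R, outerProd (fun n iₙ => A n iₙ r)

theorem stmt9 {N R : ℕ} {I : Fin N → ℕ}
    (A : (n : Fin N) → Matrix (Fin (I n)) (Fin R) ℝ) :
    (∑ i : (n : Fin N) → Fin (I n), kruskal A i ^ 2)
      = ∑ i : (n : Fin N) → Fin (I n), ∑ r : Fin R, ∑ s : Fin R,
          ∏ n, Matrix.vecMulVec (A n (i n)) (A n (i n)) r s := by
  refine Finset.sum_congr rfl fun i _ => ?_
  simp only [kruskal, outerProd, Finset.sum_apply, sq, Finset.sum_mul_sum,
    Matrix.vecMulVec_apply, ← Finset.prod_mul_distrib]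
end

section
/- Let (Ω, F, P) be a probability space and for each n = 1,...,N let A^(n) : Ω → ℝ^{I_n × R} be a random matrix with rows a^(n)_{i_n} : Ω → ℝ^R, where the collection of all row vectors is mutually independent and every entry is square-integrable. Define deterministic matrices B^(n) ∈ ℝ^{I_n × R²} whose i_n-th row is vec(E[a^(n)_{i_n} a^(n)T_{i_n}]). Then E[‖[[A^(1),...,A^(N)]]‖_F²] = 1_{∏_n I_n}^T (⊙_n B^(n)) 1_{R²}, where 1_L denotes the all-ones vector of length L. -/
open scoped BigOperators Matrix
open Finset Matrix MeasureTheory ProbabilityTheory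

/-!
Expanding the square, `‖[[A⁽¹⁾, …, A⁽ᴺ⁾]]‖²` is the sum over multi-indices `i` and pairs
`(r, s)` of `∏ₙ A⁽ⁿ⁾ᵢₙᵣ A⁽ⁿ⁾ᵢₙₛ`. For fixed `i` the factors come from the distinct rows
`a⁽ⁿ⁾ᵢₙ`, which are independent, so the expectation of the product is
`∏ₙ E[A⁽ⁿ⁾ᵢₙᵣ A⁽ⁿ⁾ᵢₙₛ] = ∏ₙ B⁽ⁿ⁾ᵢₙ,(r,s)`, the `(i, (r, s))` entry of `⊙ₙ B⁽ⁿ⁾`.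
Square-integrability makes every term integrable (Hölder for each factor, independence
for the product), which justifies exchanging expectation and the finite sums.
-/

namespace ProbabilityTheory

section IndependentProduct

variable {Ω ι : Type*} [MeasurableSpace Ω] {μ : Measure Ω} [Fintype ι]
  {𝓧 : ι → Type*} {m𝓧 : ∀ i, MeasurableSpace (𝓧 i)} {X : (i : ι) → Ω → 𝓧 i}
  {f : (i : ι) → 𝓧 i → ℝ}

lemma iIndepFun.integrable_fun_prod_comp (hX : iIndepFun X μ)
    (mX : ∀ i, AEMeasurable (X i) μ) (hf : ∀ i, AEStronglyMeasurable (f i) (μ.map (X i)))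
    (hfX : ∀ i, Integrable (fun ω => f i (X i ω)) μ) :
    Integrable (fun ω => ∏ i, f i (X i ω)) μ := by
  have := hX.isProbabilityMeasure
  have hmap : AEMeasurable (fun ω i => X i ω) μ := aemeasurable_pi_lambda _ mX
  have hprod : Integrable (fun x : (i : ι) → 𝓧 i => ∏ i, f i (x i))
      (μ.map fun ω i => X i ω) := by
    rw [hX.map_fun_eq_pi_map mX]
    exact .fintype_prod_dep fun i => (integrable_map_measure (hf i) (mX i)).2 (hfX i)
  refine (integrable_map_measure ?_ hmap).1 hprod
  rw [hX.map_fun_eq_pi_map mX]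
  exact Finset.aestronglyMeasurable_fun_prod Finset.univ fun i _ =>
    (hf i).comp_quasiMeasurePreserving (Measure.quasiMeasurePreserving_eval _ i)

end IndependentProduct

section SecondMoments

variable {Ω ρ : Type*} [MeasurableSpace Ω] {μ : Measure Ω}

lemma aemeasurable_of_memLp_coord [Countable ρ] {Y : Ω → ρ → ℝ} {p : ENNReal}
    (hY : ∀ r, MemLp (fun ω => Y ω r) p μ) : AEMeasurable Y μ :=
  aemeasurable_pi_lambda _ fun r => (hY r).aestronglyMeasurable.aemeasurable

lemma aestronglyMeasurable_coord_mul_coord {ν : Measure (ρ → ℝ)} (r s : ρ) :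
    AEStronglyMeasurable (fun v : ρ → ℝ => v r * v s) ν :=
  ((measurable_pi_apply r).mul (measurable_pi_apply s)).aestronglyMeasurable

variable {ι : Type*} [Fintype ι] [Countable ρ] {X : ι → Ω → ρ → ℝ}
  (hX : iIndepFun X μ) (hL2 : ∀ i r, MemLp (fun ω => X i ω r) 2 μ)
include hX hL2

lemma iIndepFun.integrable_prod_coord_mul_coord (r s : ρ) :
    Integrable (fun ω => ∏ i, X i ω r * X i ω s) μ :=
  hX.integrable_fun_prod_comp (fun i => aemeasurable_of_memLp_coord (hL2 i))
    (fun _ => aestronglyMeasurable_coord_mul_coord r s)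
    (fun i => (hL2 i r).integrable_mul (hL2 i s))

lemma iIndepFun.integral_prod_coord_mul_coord (r s : ρ) :
    ∫ ω, ∏ i, X i ω r * X i ω s ∂μ = ∏ i, ∫ ω, X i ω r * X i ω s ∂μ :=
  hX.integral_fun_prod_comp (fun i => aemeasurable_of_memLp_coord (hL2 i))
    (fun _ => aestronglyMeasurable_coord_mul_coord r s)

end SecondMoments

end ProbabilityTheory

lemma kruskal_sq {ι : Type*} [Fintype ι] {I : ι → ℕ} {R : ℕ}
    (A : (n : ι) → Matrix (Fin (I n)) (Fin R) ℝ) (i : (n : ι) → Fin (I n)) :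
    kruskal A i ^ 2 = ∑ p : Fin R × Fin R, ∏ n, A n (i n) p.1 * A n (i n) p.2 := by
  simp only [kruskal, outerProd, Finset.sum_apply, sq, Finset.sum_mul_sum,
    ← Finset.prod_mul_distrib, Fintype.sum_prod_type]

lemma one_dotProduct_khatriRao_mulVec_one {ι : Type*} [Fintype ι] [DecidableEq ι]
    {I : ι → ℕ} {κ : Type*} [Fintype κ] (B : (n : ι) → Matrix (Fin (I n)) κ ℝ) :
    dotProduct (fun _ => (1 : ℝ)) ((khatriRao B).mulVec (fun _ => (1 : ℝ)))
      = ∑ i : (n : ι) → Fin (I n), ∑ k, ∏ n, B n (i n) k := by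
  simp [dotProduct, Matrix.mulVec, khatriRao]

theorem stmt11_general {N R : ℕ} {I : Fin N → ℕ}
    {Ω : Type*} [MeasurableSpace Ω] (P : Measure Ω)
    (A : (n : Fin N) → Ω → Matrix (Fin (I n)) (Fin R) ℝ)
    (hindep : iIndepFun
      (fun p : Σ n : Fin N, Fin (I n) => fun ω => A p.1 ω p.2) P)
    (hL2 : ∀ n (i : Fin (I n)) (r : Fin R), MemLp (fun ω => A n ω i r) 2 P)
    (B : (n : Fin N) → Matrix (Fin (I n)) (Fin R × Fin R) ℝ)
    (hB : ∀ n (i : Fin (I n)) (p : Fin R × Fin R),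
      B n i p = ∫ ω, A n ω i p.1 * A n ω i p.2 ∂P) :
    (∫ ω, ∑ i : (n : Fin N) → Fin (I n), kruskal (fun n => A n ω) i ^ 2 ∂P)
      = dotProduct (fun _ => (1 : ℝ))
          ((khatriRao B).mulVec (fun _ => (1 : ℝ))) := by
  have hrows (i : (n : Fin N) → Fin (I n)) : iIndepFun (fun n ω => A n ω (i n)) P :=
    hindep.precomp (g := fun n => ⟨n, i n⟩) fun _ _ h => congrArg Sigma.fst h
  have hint (i : (n : Fin N) → Fin (I n)) (p : Fin R × Fin R) :
      Integrable (fun ω => ∏ n, A n ω (i n) p.1 * A n ω (i n) p.2) P :=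
    (hrows i).integrable_prod_coord_mul_coord (fun n => hL2 n (i n)) p.1 p.2
  simp_rw [kruskal_sq, one_dotProduct_khatriRao_mulVec_one, hB]
  rw [integral_finsetSum _ fun i _ => integrable_finsetSum _ fun p _ => hint i p]
  refine Finset.sum_congr rfl fun i _ => ?_
  rw [integral_finsetSum _ fun p _ => hint i p]
  exact Finset.sum_congr rfl fun p _ =>
    (hrows i).integral_prod_coord_mul_coord (fun n => hL2 n (i n)) p.1 p.2

theorem stmt11 {N R : ℕ} {I : Fin N → ℕ}
    {Ω : Type*} [MeasurableSpace Ω] (P : Measure Ω) [IsProbabilityMeasure P]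
    (A : (n : Fin N) → Ω → Matrix (Fin (I n)) (Fin R) ℝ)
    (hmeas : ∀ n (i : Fin (I n)), Measurable (fun ω => A n ω i))
    (hindep : iIndepFun
      (fun p : Σ n : Fin N, Fin (I n) => fun ω => A p.1 ω p.2) P)
    (hL2 : ∀ n (i : Fin (I n)) (r : Fin R), MemLp (fun ω => A n ω i r) 2 P)
    (B : (n : Fin N) → Matrix (Fin (I n)) (Fin R × Fin R) ℝ)
    (hB : ∀ n (i : Fin (I n)) (p : Fin R × Fin R),
      B n i p = ∫ ω, A n ω i p.1 * A n ω i p.2 ∂P) :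
    (∫ ω, ∑ i : (n : Fin N) → Fin (I n), kruskal (fun n => A n ω) i ^ 2 ∂P)
      = dotProduct (fun _ => (1 : ℝ))
          ((khatriRao B).mulVec (fun _ => (1 : ℝ))) :=
  stmt11_general P A hindep hL2 B hB
end

section
/- Let (Ω, F, P) be a probability space and for each n = 1,...,N let A^(n) : Ω → ℝ^{I_n × R} be a random matrix with rows a^(n)_{i_n} : Ω → ℝ^R, where the collection of all row vectors is mutually independent and every entry is square-integrable. Let Y be a deterministic N-th order tensor of size I_1 × ··· × I_N and let O be a deterministic tensor of the same size with entries in {0,1}. Then E[‖O ⊛ (Y − [[A^(1),...,A^(N)]])‖_F²] = Σ_{i_1,...,i_N} O_{i_1...i_N} Y_{i_1...i_N}² − 2 Σ_{i_1,...,i_N} O_{i_1...i_N} Y_{i_1...i_N} ⟨E[a^(1)_{i_1}], ..., E[a^(N)_{i_N}]⟩ + Σ_{i_1,...,i_N} O_{i_1...i_N} ⟨E[a^(1)_{i_1} a^(1)T_{i_1}], ..., E[a^(N)_{i_N} a^(N)T_{i_N}]⟩, where the middle term uses the generalized inner product of vectors and the last term the generalized inner product of R × R matrices. -/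
/-!
Fix a multi-index `i`. The entry of the Kruskal tensor at `i` is the generalized inner product
of the rows `a⁽¹⁾ᵢ₁, …, a⁽ᴺ⁾ᵢₙ`, which are independent. Expanding its square as a sum over pairs
`(r, s)` of products `∏ₙ a⁽ⁿ⁾ᵣ a⁽ⁿ⁾ₛ` of independent integrable factors, the expectation of every
monomial factorizes. Since `O` is `{0,1}`-valued, `O² = O`, and summing over `i` gives the formula.
-/

open scoped BigOperators Matrix
open Finset Matrix MeasureTheory ProbabilityTheory

/-- The paper's `⟨x⁽¹⁾, …, x⁽ᴺ⁾⟩`. -/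
def genInner {ι κ : Type*} [Fintype ι] [Fintype κ] (x : ι → κ → ℝ) : ℝ :=
  ∑ r, ∏ n, x n r

lemma genInner_sq {ι κ : Type*} [Fintype ι] [Fintype κ] (x : ι → κ → ℝ) :
    genInner x ^ 2 = genInner (fun n (p : κ × κ) => x n p.1 * x n p.2) := by
  simp only [genInner, sq, sum_mul_sum, Fintype.sum_prod_type, prod_mul_distrib]

lemma kruskal_apply {ι : Type*} [Fintype ι] {I : ι → ℕ} {R : ℕ}
    (A : (n : ι) → Matrix (Fin (I n)) (Fin R) ℝ) (i : (n : ι) → Fin (I n)) :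
    kruskal A i = genInner (fun n => A n (i n)) := by
  simp [kruskal, outerProd, genInner]

lemma sq_mul_of_zero_or_one {o : ℝ} (ho : o = 0 ∨ o = 1) (x : ℝ) : (o * x) ^ 2 = o * x ^ 2 := by
  rcases ho with rfl | rfl <;> ring

namespace ProbabilityTheory

variable {Ω ι : Type*} [MeasurableSpace Ω] {μ : Measure Ω}

lemma iIndepFun.integrable_finsetProd {X : ι → Ω → ℝ} (hX : iIndepFun X μ)
    (hint : ∀ i, Integrable (X i) μ) (s : Finset ι) :
    Integrable (∏ i ∈ s, X i) μ := by
  have := hX.isProbabilityMeasure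
  induction s using Finset.cons_induction with
  | empty => rw [prod_empty]; exact integrable_const 1
  | cons i s hi ih =>
    rw [prod_cons]
    have hindep := hX.indepFun_finsetProd_of_notMem₀ (fun j => (hint j).aemeasurable) hi
    exact hindep.symm.integrable_mul (hint i) ih

variable {κ : Type*} {X : ι → Ω → κ → ℝ}

lemma iIndepFun.coord (hX : iIndepFun X μ) (r : κ) : iIndepFun (fun n ω => X n ω r) μ :=
  hX.comp (fun _ v => v r) fun _ => measurable_pi_apply r

lemma iIndepFun.coord_mul_coord (hX : iIndepFun X μ) :
    iIndepFun (fun n ω (p : κ × κ) => X n ω p.1 * X n ω p.2) μ :=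
  hX.comp (fun _ v (p : κ × κ) => v p.1 * v p.2) fun _ => by fun_prop

lemma integrable_coord_mul_coord (hL2 : ∀ n r, MemLp (fun ω => X n ω r) 2 μ) (n : ι) (p : κ × κ) :
    Integrable (fun ω => X n ω p.1 * X n ω p.2) μ :=
  (hL2 n p.1).integrable_mul (hL2 n p.2)

variable [Fintype ι] [Fintype κ]

lemma iIndepFun.integrable_genInner (hX : iIndepFun X μ)
    (hint : ∀ n r, Integrable (fun ω => X n ω r) μ) :
    Integrable (fun ω => genInner (fun n => X n ω)) μ :=
  integrable_finsetSum _ fun r _ => by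
    simpa only [Finset.prod_fn] using (hX.coord r).integrable_finsetProd (fun n => hint n r) univ

lemma iIndepFun.integral_genInner (hX : iIndepFun X μ)
    (hint : ∀ n r, Integrable (fun ω => X n ω r) μ) :
    ∫ ω, genInner (fun n => X n ω) ∂μ = genInner (fun n r => ∫ ω, X n ω r ∂μ) := by
  unfold genInner
  rw [integral_finsetSum _ fun r _ => by
    simpa only [Finset.prod_fn] using (hX.coord r).integrable_finsetProd (fun n => hint n r) univ]
  exact sum_congr rfl fun r _ =>
    (hX.coord r).integral_fun_prod_eq_prod_integral fun n => (hint n r).aestronglyMeasurable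

lemma iIndepFun.integrable_genInner_sq (hX : iIndepFun X μ)
    (hL2 : ∀ n r, MemLp (fun ω => X n ω r) 2 μ) :
    Integrable (fun ω => genInner (fun n => X n ω) ^ 2) μ := by
  simpa only [genInner_sq] using
    hX.coord_mul_coord.integrable_genInner (integrable_coord_mul_coord hL2)

lemma iIndepFun.integral_genInner_sq (hX : iIndepFun X μ)
    (hL2 : ∀ n r, MemLp (fun ω => X n ω r) 2 μ) :
    ∫ ω, genInner (fun n => X n ω) ^ 2 ∂μ
      = ∑ r, ∑ s, ∏ n, ∫ ω, X n ω r * X n ω s ∂μ := by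
  simp only [genInner_sq]
  rw [hX.coord_mul_coord.integral_genInner (integrable_coord_mul_coord hL2), genInner,
    Fintype.sum_prod_type]

lemma iIndepFun.integrable_sq_sub_genInner (hX : iIndepFun X μ)
    (hL2 : ∀ n r, MemLp (fun ω => X n ω r) 2 μ) (y : ℝ) :
    Integrable (fun ω => (y - genInner (fun n => X n ω)) ^ 2) μ := by
  have := hX.isProbabilityMeasure
  have hK := hX.integrable_genInner fun n r => (hL2 n r).integrable one_le_two
  have hK_memLp : MemLp (fun ω => genInner (fun n => X n ω)) 2 μ :=
    (memLp_two_iff_integrable_sq hK.aestronglyMeasurable).2 (hX.integrable_genInner_sq hL2)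
  exact ((memLp_const y).sub hK_memLp).integrable_sq

lemma iIndepFun.integral_sq_sub_genInner (hX : iIndepFun X μ)
    (hL2 : ∀ n r, MemLp (fun ω => X n ω r) 2 μ) (y : ℝ) :
    ∫ ω, (y - genInner (fun n => X n ω)) ^ 2 ∂μ
      = y ^ 2 - 2 * y * genInner (fun n r => ∫ ω, X n ω r ∂μ)
        + ∑ r, ∑ s, ∏ n, ∫ ω, X n ω r * X n ω s ∂μ := by
  have := hX.isProbabilityMeasure
  have hint n r := (hL2 n r).integrable one_le_two
  have hK := hX.integrable_genInner hint
  have hlinear : Integrable (fun ω => y ^ 2 - 2 * y * genInner (fun n => X n ω)) μ :=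
    (integrable_const _).sub (hK.const_mul _)
  calc ∫ ω, (y - genInner (fun n => X n ω)) ^ 2 ∂μ
      = ∫ ω, (y ^ 2 - 2 * y * genInner (fun n => X n ω)) ∂μ
          + ∫ ω, genInner (fun n => X n ω) ^ 2 ∂μ := by
        rw [← integral_add hlinear (hX.integrable_genInner_sq hL2)]
        congr with ω
        ring
    _ = _ := by
        rw [integral_sub (integrable_const _) (hK.const_mul _), integral_const, integral_const_mul,
          hX.integral_genInner hint, hX.integral_genInner_sq hL2, probReal_univ, one_smul]

end ProbabilityTheory

theorem stmt13_general {N R : ℕ} {I : Fin N → ℕ}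
    {Ω : Type*} [MeasurableSpace Ω] (P : Measure Ω)
    (A : (n : Fin N) → Ω → Matrix (Fin (I n)) (Fin R) ℝ)
    (hindep : iIndepFun
      (fun p : Σ n : Fin N, Fin (I n) => fun ω => A p.1 ω p.2) P)
    (hL2 : ∀ n (i : Fin (I n)) (r : Fin R), MemLp (fun ω => A n ω i r) 2 P)
    (Y : ((n : Fin N) → Fin (I n)) → ℝ)
    (O : ((n : Fin N) → Fin (I n)) → ℝ)
    (hO : ∀ i, O i = 0 ∨ O i = 1) :
    (∫ ω, ∑ i : (n : Fin N) → Fin (I n),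
        (O i * (Y i - kruskal (fun n => A n ω) i)) ^ 2 ∂P)
      = (∑ i : (n : Fin N) → Fin (I n), O i * Y i ^ 2)
        - 2 * (∑ i : (n : Fin N) → Fin (I n),
            O i * Y i * ∑ r : Fin R, ∏ n, ∫ ω, A n ω (i n) r ∂P)
        + ∑ i : (n : Fin N) → Fin (I n),
            O i * ∑ r : Fin R, ∑ s : Fin R,
              ∏ n, ∫ ω, A n ω (i n) r * A n ω (i n) s ∂P := by
  have hrows (i : (n : Fin N) → Fin (I n)) : iIndepFun (fun n ω => A n ω (i n)) P :=
    hindep.precomp (g := fun n => ⟨n, i n⟩) fun _ _ h => congrArg Sigma.fst h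
  have hentry (i : (n : Fin N) → Fin (I n)) (ω : Ω) :
      (O i * (Y i - kruskal (fun n => A n ω) i)) ^ 2
        = O i * (Y i - genInner (fun n => A n ω (i n))) ^ 2 := by
    rw [kruskal_apply, sq_mul_of_zero_or_one (hO i)]
  simp_rw [hentry]
  rw [integral_finsetSum _ fun i _ =>
    ((hrows i).integrable_sq_sub_genInner (fun n => hL2 n (i n)) (Y i)).const_mul (O i)]
  simp_rw [integral_const_mul, (hrows _).integral_sq_sub_genInner (fun n => hL2 n _)]
  rw [Finset.mul_sum, ← sum_sub_distrib, ← sum_add_distrib]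
  exact sum_congr rfl fun i _ => by unfold genInner; ring

theorem stmt13 {N R : ℕ} {I : Fin N → ℕ}
    {Ω : Type*} [MeasurableSpace Ω] (P : Measure Ω) [IsProbabilityMeasure P]
    (A : (n : Fin N) → Ω → Matrix (Fin (I n)) (Fin R) ℝ)
    (hmeas : ∀ n (i : Fin (I n)), Measurable (fun ω => A n ω i))
    (hindep : iIndepFun
      (fun p : Σ n : Fin N, Fin (I n) => fun ω => A p.1 ω p.2) P)
    (hL2 : ∀ n (i : Fin (I n)) (r : Fin R), MemLp (fun ω => A n ω i r) 2 P)
    (Y : ((n : Fin N) → Fin (I n)) → ℝ)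
    (O : ((n : Fin N) → Fin (I n)) → ℝ)
    (hO : ∀ i, O i = 0 ∨ O i = 1) :
    (∫ ω, ∑ i : (n : Fin N) → Fin (I n),
        (O i * (Y i - kruskal (fun n => A n ω) i)) ^ 2 ∂P)
      = (∑ i : (n : Fin N) → Fin (I n), O i * Y i ^ 2)
        - 2 * (∑ i : (n : Fin N) → Fin (I n),
            O i * Y i * ∑ r : Fin R, ∏ n, ∫ ω, A n ω (i n) r ∂P)
        + ∑ i : (n : Fin N) → Fin (I n),
            O i * ∑ r : Fin R, ∑ s : Fin R,
              ∏ n, ∫ ω, A n ω (i n) r * A n ω (i n) s ∂P :=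
  stmt13_general P A hindep hL2 Y O hO
end
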